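/- arXiv:1406.5135 — 2 statements merged into one kernel-verified Lean document; each statement's English description precedes it below -/
import Mathlib

section
/- For every integer k > 1, |b_k| - |b_{k-1}| ≤ 1/k², where b_k := (-1)^{k+1}(1 - 2^{-k})ζ(k+1). -/
/-!
Since `|b k| = (1 - 2⁻ᵏ) ζ(k + 1)`, the difference `|b k| - |b (k - 1)|` is the series
`∑ₙ (u / n - v) / nᵏ` with `u = 1 - 2⁻ᵏ` and `v = 1 - 2 · 2⁻ᵏ`. As `u ≤ 3 v`, every term with
`n ≥ 3` is nonpositive, so the difference is at most the sum of the terms `n = 1, 2`, which is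
`(1 + 3 · 2⁻ᵏ) / 2ᵏ⁺¹`; this is at most `1 / k²` because `k² (2ᵏ + 3) ≤ 2 · 4ᵏ`.
-/

open Filter Topology Finset

/-- Riemann zeta at integer arguments: ζ(k) = ∑_{n=1}^∞ 1/n^k. -/
noncomputable def zeta (k : ℕ) : ℝ := ∑' n : ℕ, 1 / (n + 1 : ℝ) ^ k

/-- b_k = (-1)^{k+1} (1 - 2^{-k}) ζ(k+1). -/
noncomputable def b (k : ℕ) : ℝ := (-1) ^ (k + 1) * (1 - (2 : ℝ) ^ (-(k : ℤ))) * zeta (k + 1)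

lemma summable_one_div_nat_succ_pow {p : ℕ} (hp : 2 ≤ p) :
    Summable fun n : ℕ => 1 / (n + 1 : ℝ) ^ p := by
  have := (summable_nat_add_iff 1).2 (Real.summable_one_div_nat_pow.2 hp)
  exact_mod_cast this

lemma zeta_nonneg (p : ℕ) : 0 ≤ zeta p :=
  tsum_nonneg fun _ => by positivity

lemma abs_b (k : ℕ) : |b k| = (1 - (2 ^ k)⁻¹) * zeta (k + 1) := by
  have h : (2 ^ k : ℝ)⁻¹ ≤ 1 := inv_le_one_of_one_le₀ (one_le_pow₀ one_le_two)
  rw [b, zpow_neg, zpow_natCast, abs_mul, abs_mul, abs_pow, abs_neg, abs_one, one_pow, one_mul,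
    abs_of_nonneg (sub_nonneg.2 h), abs_of_nonneg (zeta_nonneg _)]

lemma mul_zeta_succ_sub_mul_zeta_le {k : ℕ} (hk : 2 ≤ k) {u v : ℝ} (hu : 0 ≤ u)
    (huv : u ≤ 3 * v) : u * zeta (k + 1) - v * zeta k ≤ u - v + (u / 2 - v) / 2 ^ k := by
  set f : ℕ → ℝ := fun n => (u / (n + 1) - v) / (n + 1 : ℝ) ^ k
  have hf : HasSum f (u * zeta (k + 1) - v * zeta k) := by
    have hu' := ((summable_one_div_nat_succ_pow (p := k + 1) (by omega)).hasSum.mul_left u)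
    have hv' := ((summable_one_div_nat_succ_pow hk).hasSum.mul_left v)
    have hfun : f = fun n : ℕ => u * (1 / (n + 1 : ℝ) ^ (k + 1)) - v * (1 / (n + 1 : ℝ) ^ k) := by
      funext n
      simp only [f]
      field_simp
      ring
    rw [hfun, zeta, zeta]
    exact hu'.sub hv'
  have htail : ∀ n : ℕ, f (n + 2) ≤ 0 := by
    intro n
    have h3 : (3 : ℝ) ≤ (n + 2 : ℕ) + 1 := by push_cast; linarith [(n.cast_nonneg : (0 : ℝ) ≤ n)]
    refine div_nonpos_of_nonpos_of_nonneg (sub_nonpos.2 ?_) (by positivity)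
    rw [div_le_iff₀ (by linarith)]
    nlinarith
  calc u * zeta (k + 1) - v * zeta k = f 0 + f 1 + ∑' n, f (n + 2) := by
        rw [← hf.tsum_eq, ← hf.summable.sum_add_tsum_nat_add 2, sum_range_succ, sum_range_one]
    _ ≤ f 0 + f 1 := add_le_of_nonpos_right (tsum_nonpos htail)
    _ = u - v + (u / 2 - v) / 2 ^ k := by
        norm_num [f]

lemma Nat.sq_le_two_pow {k : ℕ} (hk : 4 ≤ k) : k ^ 2 ≤ 2 ^ k := by
  induction k, hk using Nat.le_induction with
  | base => norm_num
  | succ n hn ih => rw [pow_succ 2 n]; nlinarith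

lemma Nat.sq_mul_two_pow_add_three_le {k : ℕ} (hk : 2 ≤ k) :
    k ^ 2 * (2 ^ k + 3) ≤ 2 * (2 ^ k) ^ 2 := by
  rcases (by omega : k = 2 ∨ k = 3 ∨ 4 ≤ k) with rfl | rfl | hk4
  · norm_num
  · norm_num
  · have h16 : 2 ^ 4 ≤ 2 ^ k := Nat.pow_le_pow_right two_pos hk4
    calc k ^ 2 * (2 ^ k + 3) ≤ 2 ^ k * (2 * 2 ^ k) :=
          Nat.mul_le_mul (Nat.sq_le_two_pow hk4) (by omega)
      _ = 2 * (2 ^ k) ^ 2 := by ring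

lemma one_add_three_div_two_pow_div_le {k : ℕ} (hk : 2 ≤ k) :
    (1 + 3 / 2 ^ k) / (2 * 2 ^ k) ≤ 1 / (k : ℝ) ^ 2 := by
  have h : (k : ℝ) ^ 2 * (2 ^ k + 3) ≤ 2 * (2 ^ k) ^ 2 := by
    exact_mod_cast Nat.sq_mul_two_pow_add_three_le hk
  have hk0 : (0 : ℝ) < k := by exact_mod_cast (by omega : 0 < k)
  rw [div_le_div_iff₀ (by positivity) (by positivity)]
  field_simp
  linarith

theorem abs_b_diff_le (k : ℕ) (hk : 1 < k) :
    |b k| - |b (k - 1)| ≤ 1 / (k : ℝ) ^ 2 := by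
  obtain ⟨m, rfl⟩ : ∃ m, k = m + 1 := ⟨k - 1, by omega⟩
  rw [Nat.add_sub_cancel, abs_b, abs_b]
  have ht : (2 : ℝ) ≤ 2 ^ m := by simpa using pow_le_pow_right₀ one_le_two (show 1 ≤ m by omega)
  have h := mul_zeta_succ_sub_mul_zeta_le hk (u := 1 - (2 ^ (m + 1))⁻¹) (v := 1 - (2 ^ m)⁻¹)
    (by rw [pow_succ]; field_simp; linarith) (by rw [pow_succ]; field_simp; linarith)
  calc _ ≤ _ := h
    _ = (1 + 3 / 2 ^ (m + 1)) / (2 * 2 ^ (m + 1)) := by rw [pow_succ]; field_simp; ring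
    _ ≤ _ := one_add_three_div_two_pow_div_le hk
end

section
/- There exists a constant C > 0 (one may take C = 5(1 + ζ(2))) such that for all integers k ≥ 4, |a_{k+1} + a_k| ≤ C/k, where (a_k) satisfies the recursion a_0 = 1, a_1 = 0, a_k = (1/k)∑_{j=0}^{k-2} a_j b_{k-1-j} for k ≥ 2 with b_k = (-1)^{k+1}(1 - 2^{-k})ζ(k+1). In particular, a_{k+1} + a_k = O(1/k). -/
/-!
The factor `(1 - 2⁻ᵐ) ζ(m+1)` in `b m` is the Dirichlet eta value
`η(m+1) = ∑_{n ≥ 1} (-1)^(n-1) / n^(m+1)`, since the even terms of `ζ(m+1)` add up to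
`2^-(m+1) ζ(m+1)`. The alternating series estimate gives `1 - 2^-(m+1) ≤ η(m+1) ≤ 1`, hence
`|b m| ≤ 1` and `|b (m+1) + b m| ≤ 2⁻ᵐ`. The first bound propagates `|a k| ≤ 1` through the
recursion. Adding the recursions for `(k+1) a (k+1)` and `k a k` gives
`(k+1) (a (k+1) + a k) = a (k-1) b 1 + ∑_{j < k-1} a j (b (k-j) + b (k-1-j)) + a k`,
and the three terms are bounded by `1`, `∑ 2⁻ⁱ ≤ 1` and `1`; so `|a (k+1) + a k| ≤ 3 / (k+1)`.
-/

open Filter Topology Finset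

noncomputable def eta (s : ℕ) : ℝ := ∑' n : ℕ, (-1) ^ n * (1 / (n + 1 : ℝ) ^ s)

lemma summable_one_div_succ_pow {s : ℕ} (hs : 2 ≤ s) :
    Summable fun n : ℕ => 1 / (n + 1 : ℝ) ^ s := by
  simpa using (summable_nat_add_iff 1).mpr (Real.summable_one_div_nat_pow.mpr hs)

lemma antitone_one_div_succ_pow (s : ℕ) : Antitone fun n : ℕ => 1 / (n + 1 : ℝ) ^ s := by
  intro m n hmn
  exact one_div_le_one_div_of_le (by positivity) (by gcongr)

lemma eta_eq_mul_zeta {s : ℕ} (hs : 2 ≤ s) : eta s = (1 - 2 * (1 / 2) ^ s) * zeta s := by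
  set f : ℕ → ℝ := fun n => 1 / (n + 1 : ℝ) ^ s
  have hf : HasSum f (zeta s) := (summable_one_div_succ_pow hs).hasSum
  have hodd : HasSum (fun k => f (2 * k + 1)) ((1 / 2) ^ s * zeta s) := by
    have hshift : (fun k => f (2 * k + 1)) = fun k => (1 / 2) ^ s * f k := by
      funext k
      simp only [f]
      rw [one_div_pow, one_div_mul_one_div, ← mul_pow]
      push_cast
      ring_nf
    exact hshift ▸ hf.mul_left _
  obtain ⟨E, heven⟩ : Summable fun k => f (2 * k) :=
    hf.summable.comp_injective (mul_right_injective₀ two_ne_zero)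
  have hE : E + (1 / 2) ^ s * zeta s = zeta s := (heven.even_add_odd hodd).unique hf
  have halt : HasSum (fun n => (-1) ^ n * f n) (E + -((1 / 2) ^ s * zeta s)) :=
    HasSum.even_add_odd (by simpa using heven) (by simpa [pow_succ] using hodd.neg)
  rw [eta, halt.tsum_eq]
  linarith

lemma abs_eta_sub_one_le {s : ℕ} (hs : 2 ≤ s) : |eta s - 1| ≤ (1 / 2) ^ s := by
  simpa [eta, one_div_pow, one_add_one_eq_two] using alternating_series_error_bound _
    (antitone_one_div_succ_pow s) (summable_one_div_succ_pow hs) 1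

lemma eta_le_one {s : ℕ} (hs : 2 ≤ s) : eta s ≤ 1 := by
  simpa [eta] using (antitone_one_div_succ_pow s).tendsto_le_alternating_series
    (summable_one_div_succ_pow hs).tendsto_alternating_series_tsum 0

lemma b_eq_eta {m : ℕ} (hm : 1 ≤ m) : b m = (-1) ^ (m + 1) * eta (m + 1) := by
  rw [b, eta_eq_mul_zeta (by omega), zpow_neg, zpow_natCast, ← inv_pow, ← one_div]
  ring

lemma abs_b_le_one (m : ℕ) : |b m| ≤ 1 := by
  rcases Nat.eq_zero_or_pos m with rfl | hm
  · simp [b]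
  rw [b_eq_eta hm, abs_mul, abs_pow, abs_neg, abs_one, one_pow, one_mul, abs_le]
  have hη := abs_le.mp (abs_eta_sub_one_le (s := m + 1) (by omega))
  have hpow : (1 / 2 : ℝ) ^ (m + 1) ≤ 1 := pow_le_one₀ (by norm_num) (by norm_num)
  constructor <;> linarith [eta_le_one (s := m + 1) (by omega)]

lemma abs_b_succ_add_b_le {m : ℕ} (hm : 1 ≤ m) : |b (m + 1) + b m| ≤ (1 / 2) ^ m := by
  have hsum : b (m + 1) + b m = (-1) ^ m * (eta (m + 2) - eta (m + 1)) := by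
    rw [b_eq_eta hm, b_eq_eta (by omega)]
    ring
  have h1 := abs_eta_sub_one_le (s := m + 1) (by omega)
  have h2 := abs_eta_sub_one_le (s := m + 2) (by omega)
  rw [hsum, abs_mul, abs_pow, abs_neg, abs_one, one_pow, one_mul]
  simp only [pow_succ] at h1 h2
  rw [abs_le] at h1 h2 ⊢
  constructor <;> nlinarith [pow_nonneg (by norm_num : (0 : ℝ) ≤ 1 / 2) m]

section Recursion

variable {a β : ℕ → ℝ} {M : ℝ}

lemma mul_eq_sum_of_rec
    (hrec : ∀ k, 2 ≤ k → a k = (1 / (k : ℝ)) * ∑ j ∈ range (k - 1), a j * β (k - 1 - j))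
    (n : ℕ) : (n + 2 : ℝ) * a (n + 2) = ∑ j ∈ range (n + 1), a j * β (n + 1 - j) := by
  rw [hrec (n + 2) (by omega)]
  push_cast
  field_simp

lemma abs_le_of_rec
    (hrec : ∀ k, 2 ≤ k → a k = (1 / (k : ℝ)) * ∑ j ∈ range (k - 1), a j * β (k - 1 - j))
    (hβ : ∀ m, |β m| ≤ 1) (h0 : |a 0| ≤ M) (h1 : |a 1| ≤ M) (k : ℕ) : |a k| ≤ M := by
  induction k using Nat.strong_induction_on with
  | _ k ih =>
    match k with
    | 0 => exact h0
    | 1 => exact h1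
    | n + 2 =>
      have hM : 0 ≤ M := (abs_nonneg _).trans h0
      have hsum : |∑ j ∈ range (n + 1), a j * β (n + 1 - j)| ≤ (n + 1) * M :=
        calc _ ≤ ∑ j ∈ range (n + 1), |a j * β (n + 1 - j)| := abs_sum_le_sum_abs _ _
          _ ≤ ∑ _j ∈ range (n + 1), M := sum_le_sum fun j hj => by
            rw [abs_mul]
            exact (mul_le_of_le_one_right (abs_nonneg _) (hβ _)).trans (ih j (by simp at hj; omega))
          _ = (n + 1) * M := by simp
      refine le_of_mul_le_mul_left ?_ (by positivity : (0 : ℝ) < n + 2)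
      calc (n + 2 : ℝ) * |a (n + 2)| = |∑ j ∈ range (n + 1), a j * β (n + 1 - j)| := by
            rw [← mul_eq_sum_of_rec hrec, abs_mul, abs_of_pos (by positivity : (0 : ℝ) < n + 2)]
        _ ≤ (n + 2) * M := by linarith

lemma abs_sum_mul_le_of_le_geometric (ha : ∀ j, |a j| ≤ M) {d : ℕ → ℝ}
    (hd : ∀ m, 1 ≤ m → |d m| ≤ (1 / 2) ^ m) (N : ℕ) :
    |∑ j ∈ range N, a j * d (N - j)| ≤ M := by
  have hM : 0 ≤ M := (abs_nonneg _).trans (ha 0)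
  calc |∑ j ∈ range N, a j * d (N - j)| ≤ ∑ j ∈ range N, |a j * d (N - j)| :=
        abs_sum_le_sum_abs _ _
    _ ≤ ∑ j ∈ range N, M * (1 / 2) ^ (N - j) := sum_le_sum fun j hj => by
        rw [abs_mul]
        exact mul_le_mul (ha j) (hd _ (by simp at hj; omega)) (abs_nonneg _) hM
    _ = M * ((1 / 2) * ∑ i ∈ range N, (1 / 2) ^ i) := by
        rw [mul_sum, mul_sum, ← sum_range_reflect]
        refine sum_congr rfl fun j hj => ?_
        rw [← pow_succ', show N - (N - 1 - j) = j + 1 by simp at hj; omega]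
    _ ≤ M * ((1 / 2) * 2) := by gcongr; exact sum_geometric_two_le N
    _ = M := by ring

lemma succ_mul_add_eq_of_rec
    (hrec : ∀ k, 2 ≤ k → a k = (1 / (k : ℝ)) * ∑ j ∈ range (k - 1), a j * β (k - 1 - j))
    (n : ℕ) : (n + 3 : ℝ) * (a (n + 3) + a (n + 2)) =
      a (n + 1) * β 1 + ∑ j ∈ range (n + 1), a j * (β (n + 1 - j + 1) + β (n + 1 - j))
        + a (n + 2) := by
  have h3 := mul_eq_sum_of_rec hrec (n + 1)
  have h2 := mul_eq_sum_of_rec hrec n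
  rw [sum_range_succ, Nat.add_sub_cancel_left] at h3
  have hsplit : ∑ j ∈ range (n + 1), a j * (β (n + 1 - j + 1) + β (n + 1 - j)) =
      ∑ j ∈ range (n + 1), a j * β (n + 1 + 1 - j) + ∑ j ∈ range (n + 1), a j * β (n + 1 - j) := by
    rw [← sum_add_distrib]
    refine sum_congr rfl fun j hj => ?_
    rw [show n + 1 + 1 - j = n + 1 - j + 1 by simp at hj; omega]
    ring
  push_cast at h3
  linear_combination h3 + h2 - hsplit

lemma abs_succ_add_le_of_rec
    (hrec : ∀ k, 2 ≤ k → a k = (1 / (k : ℝ)) * ∑ j ∈ range (k - 1), a j * β (k - 1 - j))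
    (hβ : ∀ m, |β m| ≤ 1) (hβ' : ∀ m, 1 ≤ m → |β (m + 1) + β m| ≤ (1 / 2) ^ m)
    (ha : ∀ j, |a j| ≤ M) {k : ℕ} (hk : 2 ≤ k) : |a (k + 1) + a k| ≤ 3 * M / (k + 1) := by
  obtain ⟨n, rfl⟩ : ∃ n, k = n + 2 := ⟨k - 2, by omega⟩
  have hfirst : |a (n + 1) * β 1| ≤ M := by
    rw [abs_mul]
    exact (mul_le_of_le_one_right (abs_nonneg _) (hβ 1)).trans (ha _)
  have hconv := abs_sum_mul_le_of_le_geometric ha hβ' (n + 1)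
  have hpos : (0 : ℝ) < (n + 2 : ℕ) + 1 := by positivity
  rw [le_div_iff₀ hpos]
  calc |a (n + 2 + 1) + a (n + 2)| * ((n + 2 : ℕ) + 1)
      = |(n + 3 : ℝ) * (a (n + 3) + a (n + 2))| := by
        rw [abs_mul, abs_of_pos (by positivity : (0 : ℝ) < n + 3), mul_comm]
        push_cast
        ring_nf
    _ = |a (n + 1) * β 1 + ∑ j ∈ range (n + 1), a j * (β (n + 1 - j + 1) + β (n + 1 - j))
          + a (n + 2)| := by rw [succ_mul_add_eq_of_rec hrec n]
    _ ≤ M + M + M := (abs_add_three _ _ _).trans (add_le_add (add_le_add hfirst hconv) (ha _))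
    _ = 3 * M := by ring

end Recursion

theorem a_succ_add_a_bigO (a : ℕ → ℝ)
    (h0 : a 0 = 1) (h1 : a 1 = 0)
    (hrec : ∀ k, 2 ≤ k →
      a k = (1 / (k : ℝ)) * ∑ j ∈ Finset.range (k - 1), a j * b (k - 1 - j)) :
    ∃ C : ℝ, 0 < C ∧ ∀ k : ℕ, 4 ≤ k → |a (k + 1) + a k| ≤ C / (k : ℝ) := by
  have ha : ∀ j, |a j| ≤ 1 := abs_le_of_rec hrec abs_b_le_one (by simp [h0]) (by simp [h1])
  refine ⟨3, by norm_num, fun k hk => ?_⟩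
  have hk' : (0 : ℝ) < k := Nat.cast_pos.mpr (by omega)
  calc |a (k + 1) + a k| ≤ 3 * 1 / (k + 1) :=
        abs_succ_add_le_of_rec hrec abs_b_le_one (fun _ => abs_b_succ_add_b_le) ha (by omega)
    _ ≤ 3 / k := by rw [mul_one]; gcongr; linarith
end
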